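/- Head variable property: if t is a normal simply typed λ-term with x₁:A₁,...,xₙ:Aₙ, z:B ⊢ t : A, then either every occurrence of z in t is applied to an argument or a projection (i.e., occurs as z ξ for some term or projection ξ), or B = ⊥, or B is a subformula of A, or B is a proper subformula of some Aᵢ. -/
import Mathlib


/-- Propositional formulas: atoms, ⊥, implication, conjunction. -/
inductive Formula : Type where
  | atom : Nat → Formula
  | bot  : Formula
  | imp  : Formula → Formula → Formula
  | conj : Formula → Formula → Formula
deriving DecidableEq

/-- A formula is prime if it is not a conjunction. -/
def Formula.IsPrime : Formula → Prop
  | .conj _ _ => False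
  | _ => True

/-- Atomic formulas (atoms and ⊥). -/
def Formula.IsAtomic : Formula → Prop
  | .atom _ => True
  | .bot => True
  | _ => False

/-- Subformula relation. -/
inductive Subformula : Formula → Formula → Prop where
  | refl (A : Formula) : Subformula A A
  | impL : Subformula A B → Subformula A (Formula.imp B C)
  | impR : Subformula A C → Subformula A (Formula.imp B C)
  | conjL : Subformula A B → Subformula A (Formula.conj B C)
  | conjR : Subformula A C → Subformula A (Formula.conj B C)

/-- Proper subformula: subformula and not equal. -/
def ProperSub (A B : Formula) : Prop := Subformula A B ∧ A ≠ B

/-- B is a strong subformula of A: a proper subformula of some prime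
proper subformula of A. -/
def StrongSub (B A : Formula) : Prop :=
  ∃ P, Formula.IsPrime P ∧ ProperSub P A ∧ ProperSub B P

/-- `ConjList A l` : A is the conjunction of the (nonempty) list of formulas l. -/
inductive ConjList : Formula → List Formula → Prop where
  | single (A : Formula) : ConjList A [A]
  | conj : ConjList A l → ConjList B m → ConjList (Formula.conj A B) (l ++ m)

/-- P is a prime factor of A: A is a conjunction of prime formulas among which P. -/
def PrimeFactor (P A : Formula) : Prop :=
  ∃ l, ConjList A l ∧ (∀ Q ∈ l, Formula.IsPrime Q) ∧ P ∈ l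

/-- Number of symbols of a formula. -/
def Formula.size : Formula → Nat
  | .atom _ => 1
  | .bot => 1
  | .imp A B => A.size + B.size + 1
  | .conj A B => A.size + B.size + 1

/-- The canonical list of prime factors of a formula. -/
def primeFactors : Formula → List Formula
  | .conj A B => primeFactors A ++ primeFactors B
  | A => [A]
/-- Simply typed λ-terms (de Bruijn indices) with pairs, projections and efq. -/
inductive Term : Type where
  | var : Nat → Term
  | lam : Formula → Term → Term
  | app : Term → Term → Term
  | pair : Term → Term → Term
  | proj : Bool → Term → Term
  | efq : Formula → Term → Term
deriving DecidableEq

/-- Lift a renaming under a binder. -/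
def liftF (f : Nat → Nat) : Nat → Nat
  | 0 => 0
  | n+1 => f n + 1

def Term.rename (f : Nat → Nat) : Term → Term
  | .var n => .var (f n)
  | .lam A t => .lam A (t.rename (liftF f))
  | .app t u => .app (t.rename f) (u.rename f)
  | .pair t u => .pair (t.rename f) (u.rename f)
  | .proj b t => .proj b (t.rename f)
  | .efq A t => .efq A (t.rename f)

/-- Capture-avoiding substitution of `s` for variable `k` (other variables
above `k` are shifted down). -/
def Term.subst (k : Nat) (s : Term) : Term → Term
  | .var n => if n = k then s else if k < n then .var (n-1) else .var n
  | .lam A t => .lam A (Term.subst (k+1) (s.rename Nat.succ) t)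
  | .app t u => .app (Term.subst k s t) (Term.subst k s u)
  | .pair t u => .pair (Term.subst k s t) (Term.subst k s u)
  | .proj b t => .proj b (Term.subst k s t)
  | .efq A t => .efq A (Term.subst k s t)

/-- `FreeIn n t`: the variable `n` occurs free in `t`. -/
def FreeIn (n : Nat) : Term → Prop
  | .var m => m = n
  | .lam _ t => FreeIn (n+1) t
  | .app t u => FreeIn n t ∨ FreeIn n u
  | .pair t u => FreeIn n t ∨ FreeIn n u
  | .proj _ t => FreeIn n t
  | .efq _ t => FreeIn n t

/-- Typing of simply typed λ-terms. -/
inductive Typing : List Formula → Term → Formula → Prop where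
  | var : Γ[n]? = some A → Typing Γ (.var n) A
  | lam : Typing (A::Γ) t B → Typing Γ (.lam A t) (.imp A B)
  | app : Typing Γ t (.imp A B) → Typing Γ u A → Typing Γ (.app t u) B
  | pair : Typing Γ t A → Typing Γ u B → Typing Γ (.pair t u) (.conj A B)
  | projL : Typing Γ t (.conj A B) → Typing Γ (.proj false t) A
  | projR : Typing Γ t (.conj A B) → Typing Γ (.proj true t) B
  | efq : P.IsAtomic → P ≠ .bot → Typing Γ t .bot → Typing Γ (.efq P t) P

/-- β- and projection-reduction, closed under all term contexts. -/
inductive Red : Term → Term → Prop where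
  | beta : Red (.app (.lam A t) u) (t.subst 0 u)
  | projL : Red (.proj false (.pair t u)) t
  | projR : Red (.proj true (.pair t u)) u
  | lam : Red t t' → Red (.lam A t) (.lam A t')
  | appL : Red t t' → Red (.app t u) (.app t' u)
  | appR : Red u u' → Red (.app t u) (.app t u')
  | pairL : Red t t' → Red (.pair t u) (.pair t' u)
  | pairR : Red u u' → Red (.pair t u) (.pair t u')
  | proj : Red t t' → Red (.proj b t) (.proj b t')
  | efq : Red t t' → Red (.efq A t) (.efq A t')
/-- `Applied k t`: every free occurrence of the variable `k` in `t` is applied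
to an argument or a projection (occurs as `z ξ`). -/
def Applied (k : Nat) : Term → Prop
  | .var n => n ≠ k
  | .app (.var _) u => Applied k u
  | .app t u => Applied k t ∧ Applied k u
  | .proj _ (.var _) => True
  | .proj _ t => Applied k t
  | .lam _ t => Applied (k+1) t
  | .pair t u => Applied k t ∧ Applied k u
  | .efq _ t => Applied k t

theorem Subformula.trans' {A B C : Formula} (h1 : Subformula A B) (h2 : Subformula B C) :
    Subformula A C := by
  induction h2 with
  | refl => exact h1
  | impL _ ih => exact .impL ih
  | impR _ ih => exact .impR ih
  | conjL _ ih => exact .conjL ih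
  | conjR _ ih => exact .conjR ih

theorem Subformula.size_le' {A B : Formula} (h : Subformula A B) : A.size ≤ B.size := by
  induction h <;> simp [Formula.size] <;> omega

theorem sub_bot {B : Formula} (h : Subformula B .bot) : B = .bot := by cases h; rfl

def Neutral : Term → Prop
  | .var _ => True
  | .app _ _ => True
  | .proj _ _ => True
  | _ => False

theorem main_lemma {Γ : List Formula} {t : Term} {A : Formula} (ht : Typing Γ t A) :
    (∀ u, ¬ Red t u) →
    (∀ k B, Γ[k]? = some B →
      Applied k t ∨ B = Formula.bot ∨ Subformula B A ∨ ∃ D ∈ Γ, ProperSub B D) ∧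
    (Neutral t →
      (∃ C ∈ Γ, Subformula A C) ∧
      ∀ k B, Γ[k]? = some B →
        Applied k t ∨ B = Formula.bot ∨ t = .var k ∨ ∃ D ∈ Γ, ProperSub B D) := by
  induction ht with
  | @var Γ n A hn =>
    intro _
    have hmem : A ∈ Γ := List.mem_of_getElem? hn
    constructor
    · intro k B hk
      by_cases hnk : n = k
      · subst hnk
        rw [hn] at hk; cases hk
        exact Or.inr (Or.inr (Or.inl (.refl _)))
      · exact Or.inl hnk
    · intro _
      refine ⟨⟨A, hmem, .refl _⟩, ?_⟩
      intro k B hk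
      by_cases hnk : n = k
      · subst hnk; exact Or.inr (Or.inr (Or.inl rfl))
      · exact Or.inl hnk
  | @lam Γ A0 t B0 ht ih =>
    intro hnf
    have hnt : ∀ u, ¬ Red t u := fun u h => hnf _ (.lam h)
    constructor
    · intro k B hk
      have := (ih hnt).1 (k+1) B (by simpa using hk)
      rcases this with h | h | h | ⟨D, hD, hps⟩
      · exact Or.inl h
      · exact Or.inr (Or.inl h)
      · exact Or.inr (Or.inr (Or.inl (.impR h)))
      · rcases List.mem_cons.mp hD with rfl | hD'
        · exact Or.inr (Or.inr (Or.inl (.impL hps.1)))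
        · exact Or.inr (Or.inr (Or.inr ⟨D, hD', hps⟩))
    · intro h; exact absurd h (by simp [Neutral])
  | @app Γ t A' A0 u ht1 ht2 ih1 ih2 =>
    intro hnf
    have hnt : ∀ v, ¬ Red t v := fun v h => hnf _ (.appL h)
    have hnu : ∀ v, ¬ Red u v := fun v h => hnf _ (.appR h)
    have hMu := (ih2 hnu).1
    -- t cannot be a lambda, pair, or efq
    match t, ht1, hnt, ih1 with
    | .lam A1 t1, ht1, hnt, ih1 => exact absurd Red.beta (hnf _)
    | .pair a b, ht1, hnt, ih1 => cases ht1
    | .efq P t1, ht1, hnt, ih1 => cases ht1 with | efq hP _ _ => exact absurd hP (by simp [Formula.IsAtomic])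
    | .var n, ht1, hnt, ih1 =>
      have hn : Γ[n]? = some (Formula.imp A' A0) := by cases ht1; assumption
      have h1 : ∃ C ∈ Γ, Subformula (Formula.imp A' A0) C :=
        ⟨_, List.mem_of_getElem? hn, .refl _⟩
      have hsub : ∀ B, Subformula B A' → ∃ D ∈ Γ, ProperSub B D := by
        obtain ⟨C, hC, hs⟩ := h1
        intro B hB
        refine ⟨C, hC, Subformula.trans' (.impL hB) hs, fun e => ?_⟩
        have e1 := hB.size_le'
        have e2 := hs.size_le'
        subst e
        simp [Formula.size] at e2
        omega
      have h2 : ∀ k B, Γ[k]? = some B →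
          Applied k (Term.app (.var n) u) ∨ B = Formula.bot ∨ ∃ D ∈ Γ, ProperSub B D := by
        intro k B hk
        rcases hMu k B hk with h | h | h | h
        · exact Or.inl h
        · exact Or.inr (Or.inl h)
        · exact Or.inr (Or.inr (hsub B h))
        · exact Or.inr (Or.inr h)
      refine ⟨fun k B hk => ?_, fun _ => ⟨⟨_, h1.choose_spec.1, ?_⟩, fun k B hk => ?_⟩⟩
      · rcases h2 k B hk with h | h | h
        · exact Or.inl h
        · exact Or.inr (Or.inl h)
        · exact Or.inr (Or.inr (Or.inr h))
      · exact Subformula.trans' (.impR (.refl _)) h1.choose_spec.2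
      · rcases h2 k B hk with h | h | h
        · exact Or.inl h
        · exact Or.inr (Or.inl h)
        · exact Or.inr (Or.inr (Or.inr h))
    | .app a b, ht1, hnt, ih1 =>
      have hN := (ih1 hnt).2 trivial
      obtain ⟨⟨C, hC, hs⟩, hN2⟩ := hN
      have hsub : ∀ B, Subformula B A' → ∃ D ∈ Γ, ProperSub B D := by
        intro B hB
        refine ⟨C, hC, Subformula.trans' (.impL hB) hs, fun e => ?_⟩
        have e1 := hB.size_le'
        have e2 := hs.size_le'
        subst e
        simp [Formula.size] at e2
        omega
      have h2 : ∀ k B, Γ[k]? = some B →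
          Applied k (Term.app (.app a b) u) ∨ B = Formula.bot ∨ ∃ D ∈ Γ, ProperSub B D := by
        intro k B hk
        rcases hN2 k B hk with h | h | h | h
        · rcases hMu k B hk with h' | h' | h' | h'
          · exact Or.inl ⟨h, h'⟩
          · exact Or.inr (Or.inl h')
          · exact Or.inr (Or.inr (hsub B h'))
          · exact Or.inr (Or.inr h')
        · exact Or.inr (Or.inl h)
        · exact absurd h (by simp)
        · exact Or.inr (Or.inr h)
      refine ⟨fun k B hk => ?_, fun _ => ⟨⟨C, hC, Subformula.trans' (.impR (.refl _)) hs⟩, fun k B hk => ?_⟩⟩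
      · rcases h2 k B hk with h | h | h
        · exact Or.inl h
        · exact Or.inr (Or.inl h)
        · exact Or.inr (Or.inr (Or.inr h))
      · rcases h2 k B hk with h | h | h
        · exact Or.inl h
        · exact Or.inr (Or.inl h)
        · exact Or.inr (Or.inr (Or.inr h))
    | .proj bb a, ht1, hnt, ih1 =>
      have hN := (ih1 hnt).2 trivial
      obtain ⟨⟨C, hC, hs⟩, hN2⟩ := hN
      have hsub : ∀ B, Subformula B A' → ∃ D ∈ Γ, ProperSub B D := by
        intro B hB
        refine ⟨C, hC, Subformula.trans' (.impL hB) hs, fun e => ?_⟩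
        have e1 := hB.size_le'
        have e2 := hs.size_le'
        subst e
        simp [Formula.size] at e2
        omega
      have h2 : ∀ k B, Γ[k]? = some B →
          Applied k (Term.app (.proj bb a) u) ∨ B = Formula.bot ∨ ∃ D ∈ Γ, ProperSub B D := by
        intro k B hk
        rcases hN2 k B hk with h | h | h | h
        · rcases hMu k B hk with h' | h' | h' | h'
          · exact Or.inl ⟨h, h'⟩
          · exact Or.inr (Or.inl h')
          · exact Or.inr (Or.inr (hsub B h'))
          · exact Or.inr (Or.inr h')
        · exact Or.inr (Or.inl h)
        · exact absurd h (by simp)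
        · exact Or.inr (Or.inr h)
      refine ⟨fun k B hk => ?_, fun _ => ⟨⟨C, hC, Subformula.trans' (.impR (.refl _)) hs⟩, fun k B hk => ?_⟩⟩
      · rcases h2 k B hk with h | h | h
        · exact Or.inl h
        · exact Or.inr (Or.inl h)
        · exact Or.inr (Or.inr (Or.inr h))
      · rcases h2 k B hk with h | h | h
        · exact Or.inl h
        · exact Or.inr (Or.inl h)
        · exact Or.inr (Or.inr (Or.inr h))
  | @pair Γ t A0 u B0 ht1 ht2 ih1 ih2 =>
    intro hnf
    have hnt : ∀ v, ¬ Red t v := fun v h => hnf _ (.pairL h)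
    have hnu : ∀ v, ¬ Red u v := fun v h => hnf _ (.pairR h)
    constructor
    · intro k B hk
      rcases (ih1 hnt).1 k B hk with h | h | h | h
      · rcases (ih2 hnu).1 k B hk with h' | h' | h' | h'
        · exact Or.inl ⟨h, h'⟩
        · exact Or.inr (Or.inl h')
        · exact Or.inr (Or.inr (Or.inl (.conjR h')))
        · exact Or.inr (Or.inr (Or.inr h'))
      · exact Or.inr (Or.inl h)
      · exact Or.inr (Or.inr (Or.inl (.conjL h)))
      · exact Or.inr (Or.inr (Or.inr h))
    · intro h; exact absurd h (by simp [Neutral])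
  | @projL Γ t A0 B0 ht1 ih1 =>
    intro hnf
    have hnt : ∀ v, ¬ Red t v := fun v h => hnf _ (.proj h)
    match t, ht1, hnt, ih1 with
    | .lam A1 t1, ht1, hnt, ih1 => cases ht1
    | .pair a b, ht1, hnt, ih1 => exact absurd Red.projL (hnf _)
    | .efq P t1, ht1, hnt, ih1 => cases ht1 with | efq hP _ _ => exact absurd hP (by simp [Formula.IsAtomic])
    | .var n, ht1, hnt, ih1 =>
      have hn : Γ[n]? = some (Formula.conj A0 B0) := by cases ht1; assumption
      refine ⟨fun k B hk => Or.inl trivial,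
        fun _ => ⟨⟨_, List.mem_of_getElem? hn, .conjL (.refl _)⟩, fun k B hk => Or.inl trivial⟩⟩
    | .app a b, ht1, hnt, ih1 =>
      obtain ⟨⟨C, hC, hs⟩, hN2⟩ := (ih1 hnt).2 trivial
      have h2 : ∀ k B, Γ[k]? = some B →
          Applied k (Term.proj false (.app a b)) ∨ B = Formula.bot ∨ ∃ D ∈ Γ, ProperSub B D := by
        intro k B hk
        rcases hN2 k B hk with h | h | h | h
        · exact Or.inl h
        · exact Or.inr (Or.inl h)
        · exact absurd h (by simp)
        · exact Or.inr (Or.inr h)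
      refine ⟨fun k B hk => ?_, fun _ => ⟨⟨C, hC, Subformula.trans' (.conjL (.refl _)) hs⟩, fun k B hk => ?_⟩⟩
      · rcases h2 k B hk with h | h | h
        · exact Or.inl h
        · exact Or.inr (Or.inl h)
        · exact Or.inr (Or.inr (Or.inr h))
      · rcases h2 k B hk with h | h | h
        · exact Or.inl h
        · exact Or.inr (Or.inl h)
        · exact Or.inr (Or.inr (Or.inr h))
    | .proj bb a, ht1, hnt, ih1 =>
      obtain ⟨⟨C, hC, hs⟩, hN2⟩ := (ih1 hnt).2 trivial
      have h2 : ∀ k B, Γ[k]? = some B →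
          Applied k (Term.proj false (.proj bb a)) ∨ B = Formula.bot ∨ ∃ D ∈ Γ, ProperSub B D := by
        intro k B hk
        rcases hN2 k B hk with h | h | h | h
        · exact Or.inl h
        · exact Or.inr (Or.inl h)
        · exact absurd h (by simp)
        · exact Or.inr (Or.inr h)
      refine ⟨fun k B hk => ?_, fun _ => ⟨⟨C, hC, Subformula.trans' (.conjL (.refl _)) hs⟩, fun k B hk => ?_⟩⟩
      · rcases h2 k B hk with h | h | h
        · exact Or.inl h
        · exact Or.inr (Or.inl h)
        · exact Or.inr (Or.inr (Or.inr h))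
      · rcases h2 k B hk with h | h | h
        · exact Or.inl h
        · exact Or.inr (Or.inl h)
        · exact Or.inr (Or.inr (Or.inr h))
  | @projR Γ t A0 B0 ht1 ih1 =>
    intro hnf
    have hnt : ∀ v, ¬ Red t v := fun v h => hnf _ (.proj h)
    match t, ht1, hnt, ih1 with
    | .lam A1 t1, ht1, hnt, ih1 => cases ht1
    | .pair a b, ht1, hnt, ih1 => exact absurd Red.projR (hnf _)
    | .efq P t1, ht1, hnt, ih1 => cases ht1 with | efq hP _ _ => exact absurd hP (by simp [Formula.IsAtomic])
    | .var n, ht1, hnt, ih1 =>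
      have hn : Γ[n]? = some (Formula.conj A0 B0) := by cases ht1; assumption
      refine ⟨fun k B hk => Or.inl trivial,
        fun _ => ⟨⟨_, List.mem_of_getElem? hn, .conjR (.refl _)⟩, fun k B hk => Or.inl trivial⟩⟩
    | .app a b, ht1, hnt, ih1 =>
      obtain ⟨⟨C, hC, hs⟩, hN2⟩ := (ih1 hnt).2 trivial
      have h2 : ∀ k B, Γ[k]? = some B →
          Applied k (Term.proj true (.app a b)) ∨ B = Formula.bot ∨ ∃ D ∈ Γ, ProperSub B D := by
        intro k B hk
        rcases hN2 k B hk with h | h | h | h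
        · exact Or.inl h
        · exact Or.inr (Or.inl h)
        · exact absurd h (by simp)
        · exact Or.inr (Or.inr h)
      refine ⟨fun k B hk => ?_, fun _ => ⟨⟨C, hC, Subformula.trans' (.conjR (.refl _)) hs⟩, fun k B hk => ?_⟩⟩
      · rcases h2 k B hk with h | h | h
        · exact Or.inl h
        · exact Or.inr (Or.inl h)
        · exact Or.inr (Or.inr (Or.inr h))
      · rcases h2 k B hk with h | h | h
        · exact Or.inl h
        · exact Or.inr (Or.inl h)
        · exact Or.inr (Or.inr (Or.inr h))
    | .proj bb a, ht1, hnt, ih1 =>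
      obtain ⟨⟨C, hC, hs⟩, hN2⟩ := (ih1 hnt).2 trivial
      have h2 : ∀ k B, Γ[k]? = some B →
          Applied k (Term.proj true (.proj bb a)) ∨ B = Formula.bot ∨ ∃ D ∈ Γ, ProperSub B D := by
        intro k B hk
        rcases hN2 k B hk with h | h | h | h
        · exact Or.inl h
        · exact Or.inr (Or.inl h)
        · exact absurd h (by simp)
        · exact Or.inr (Or.inr h)
      refine ⟨fun k B hk => ?_, fun _ => ⟨⟨C, hC, Subformula.trans' (.conjR (.refl _)) hs⟩, fun k B hk => ?_⟩⟩
      · rcases h2 k B hk with h | h | h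
        · exact Or.inl h
        · exact Or.inr (Or.inl h)
        · exact Or.inr (Or.inr (Or.inr h))
      · rcases h2 k B hk with h | h | h
        · exact Or.inl h
        · exact Or.inr (Or.inl h)
        · exact Or.inr (Or.inr (Or.inr h))
  | @efq P Γ t hP hPb ht1 ih1 =>
    intro hnf
    have hnt : ∀ v, ¬ Red t v := fun v h => hnf _ (.efq h)
    constructor
    · intro k B hk
      rcases (ih1 hnt).1 k B hk with h | h | h | h
      · exact Or.inl h
      · exact Or.inr (Or.inl h)
      · exact Or.inr (Or.inl (sub_bot h))
      · exact Or.inr (Or.inr (Or.inr h))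
    · intro h; exact absurd h (by simp [Neutral])

/-- head variable property for normal simply typed λ-terms. -/
theorem head_variable_property (Γ : List Formula) (t : Term) (A B : Formula)
    (ht : Typing (B :: Γ) t A) (hnf : ∀ u, ¬ Red t u) :
    Applied 0 t ∨ B = Formula.bot ∨ Subformula B A ∨
      ∃ Ai ∈ Γ, ProperSub B Ai := by
  rcases (main_lemma ht hnf).1 0 B (by simp) with h | h | h | ⟨D, hD, hps⟩
  · exact Or.inl h
  · exact Or.inr (Or.inl h)
  · exact Or.inr (Or.inr (Or.inl h))
  · rcases List.mem_cons.mp hD with rfl | hD'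
    · exact absurd rfl hps.2
    · exact Or.inr (Or.inr (Or.inr ⟨D, hD', hps⟩))
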